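/- For the modularity function F_{ij}(G) = (N/(4m))(A_{ij} - d_i d_j/(2m)), if G' is obtained from G by adding one edge (so G' has m+1 edges, degrees d'_i), then for all pairs (i,j), |F_{ij}(G) - F_{ij}(G')| ≤ 11N/(8m). -/

import Mathlib

open scoped Classical

/-!
Write `c = N/(4m)` and `P = dᵢdⱼ/(2m)`, so that `F = c (A - P)`. Since `N/(4(m+1)) = c - c/(m+1)`,
the difference of the two modularity values splits as
`c (A - A') + c (P' - P) + c/(m+1) (A' - P')`.
Adding one edge raises each degree by at most one and every degree is at most `m`, so
`|P' - P| ≤ 1` and `0 ≤ P' ≤ (m+1)/2`; the three terms are therefore at most `c`, `c` and `c/2`, giving even `5N/(8m)`.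
-/

open Set

namespace SimpleGraph

variable {V : Type*} (G : SimpleGraph V)

theorem eq_sup_edge_of_adj_iff {G' : SimpleGraph V} {s t : V}
    (h : ∀ i j, G'.Adj i j ↔ G.Adj i j ∨ (i = s ∧ j = t) ∨ (i = t ∧ j = s)) :
    G' = G ⊔ edge s t := by
  ext i j
  rw [sup_adj, edge_adj, h]
  constructor
  · rintro (hG | hst)
    · exact .inl hG
    · exact .inr ⟨hst, ((h i j).2 (.inr hst)).ne⟩
  · rintro (hG | ⟨hst, -⟩)
    exacts [.inl hG, .inr hst]

variable [Finite V]

theorem ncard_neighborSet_le_ncard_edgeSet (v : V) :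
    (G.neighborSet v).ncard ≤ G.edgeSet.ncard := by
  classical
  rw [← ncard_congr' (G.incidenceSetEquivNeighborSet v)]
  exact ncard_le_ncard (G.incidenceSet_subset v)

theorem ncard_neighborSet_edge_le_one (s t v : V) : ((edge s t).neighborSet v).ncard ≤ 1 := by
  refine (ncard_le_one).2 fun a ha b hb ↦ ?_
  exact Sym2.congr_right.1 (((adj_edge _ _).1 ha).1.symm.trans ((adj_edge _ _).1 hb).1)

theorem ncard_neighborSet_sup_edge_le (s t v : V) :
    ((G ⊔ edge s t).neighborSet v).ncard ≤ (G.neighborSet v).ncard + 1 := by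
  rw [neighborSet_sup]
  exact (ncard_union_le _ _).trans (Nat.add_le_add_left (ncard_neighborSet_edge_le_one s t v) _)

theorem ncard_neighborSet_le_sup_edge (s t v : V) :
    (G.neighborSet v).ncard ≤ ((G ⊔ edge s t).neighborSet v).ncard :=
  ncard_le_ncard (neighborSet_mono le_sup_left v)

end SimpleGraph

/-- The expected number of `i`–`j` edges in the configuration null model. -/
noncomputable def expectedAdj (m dᵢ dⱼ : ℝ) : ℝ := dᵢ * dⱼ / (2 * m)

noncomputable def modularity (N m A dᵢ dⱼ : ℝ) : ℝ := N / (4 * m) * (A - expectedAdj m dᵢ dⱼ)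

theorem expectedAdj_nonneg {m x y : ℝ} (hm : 0 ≤ m) (hx : 0 ≤ x) (hy : 0 ≤ y) :
    0 ≤ expectedAdj m x y := by
  unfold expectedAdj; positivity

theorem expectedAdj_le_half {m x y : ℝ} (hm : 0 < m) (hxm : x ≤ m) (hy : 0 ≤ y) (hym : y ≤ m) :
    expectedAdj m x y ≤ m / 2 := by
  unfold expectedAdj
  rw [div_le_div_iff₀ (by positivity) two_pos]
  nlinarith [mul_le_mul_of_nonneg_right hxm hy]

theorem abs_expectedAdj_succ_sub_le_one {m x y x' y' : ℝ} (hm : 0 < m)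
    (hx : 0 ≤ x) (hxm : x ≤ m) (hy : 0 ≤ y) (hym : y ≤ m)
    (hxx' : x ≤ x') (hx' : x' ≤ x + 1) (hyy' : y ≤ y') (hy' : y' ≤ y + 1) :
    |expectedAdj (m + 1) x' y' - expectedAdj m x y| ≤ 1 := by
  unfold expectedAdj
  have hxy : x * y ≤ x' * y' := mul_le_mul hxx' hyy' hy (hx.trans hxx')
  have hxy' : x' * y' ≤ (x + 1) * (y + 1) := mul_le_mul hx' hy' (hy.trans hyy') (by linarith)
  have hxym : x * y ≤ m * m := mul_le_mul hxm hym hy hm.le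
  rw [abs_le, div_sub_div _ _ (by positivity) (by positivity), le_div_iff₀ (by positivity),
    div_le_iff₀ (by positivity)]
  constructor <;> nlinarith

theorem abs_modularity_sub_modularity_succ_le {N m A A' x y x' y' : ℝ} (hN : 0 ≤ N) (hm : 1 ≤ m)
    (hA : A ∈ Icc (0 : ℝ) 1) (hA' : A' ∈ Icc (0 : ℝ) 1)
    (hx : 0 ≤ x) (hxm : x ≤ m) (hy : 0 ≤ y) (hym : y ≤ m)
    (hxx' : x ≤ x') (hx' : x' ≤ x + 1) (hyy' : y ≤ y') (hy' : y' ≤ y + 1) :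
    |modularity N m A x y - modularity N (m + 1) A' x' y'| ≤ 5 * N / (8 * m) := by
  have hm0 : 0 < m := by linarith
  have hc' : N / (4 * (m + 1)) = N / (4 * m) - N / (4 * m) / (m + 1) := by field_simp; ring
  set c := N / (4 * m) with hc_def
  set P := expectedAdj m x y
  set P' := expectedAdj (m + 1) x' y'
  have hc : 0 ≤ c := by positivity
  have hdP : |P' - P| ≤ 1 := abs_expectedAdj_succ_sub_le_one hm0 hx hxm hy hym hxx' hx' hyy' hy'
  have hP' : |A' - P'| ≤ (m + 1) / 2 :=
    abs_sub_le_of_nonneg_of_le hA'.1 (by linarith [hA'.2]) (expectedAdj_nonneg (by linarith)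
      (hx.trans hxx') (hy.trans hyy'))
      (expectedAdj_le_half (by linarith) (by linarith) (by linarith) (by linarith))
  have hsplit : modularity N m A x y - modularity N (m + 1) A' x' y' =
      c * (A - A') + c * (P' - P) + c / (m + 1) * (A' - P') := by
    simp only [modularity, hc']
    ring
  calc |modularity N m A x y - modularity N (m + 1) A' x' y'|
      ≤ |c * (A - A')| + |c * (P' - P)| + |c / (m + 1) * (A' - P')| := by
        rw [hsplit]; exact abs_add_three _ _ _
    _ ≤ c * 1 + c * 1 + c / (m + 1) * ((m + 1) / 2) := by
        simp only [abs_mul, abs_of_nonneg hc, abs_of_nonneg (by positivity : 0 ≤ c / (m + 1))]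
        gcongr
        exact abs_sub_le_of_nonneg_of_le hA.1 hA.2 hA'.1 hA'.2
    _ = 5 * N / (8 * m) := by rw [hc_def]; field_simp; ring

theorem modularity_one_edge_estimate_general {N : ℕ} (G G' : SimpleGraph (Fin N))
    (i₀ j₀ : Fin N)
    (hG' : ∀ i j, G'.Adj i j ↔ G.Adj i j ∨ (i = i₀ ∧ j = j₀) ∨ (i = j₀ ∧ j = i₀))
    (m : ℕ) (hm : m = G.edgeSet.ncard) (hm1 : 1 ≤ m) :
    ∀ i j : Fin N,
      |(N : ℝ) / (4 * m) *
          ((if G.Adj i j then (1 : ℝ) else 0) -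
            ((G.neighborSet i).ncard : ℝ) * ((G.neighborSet j).ncard : ℝ) / (2 * m)) -
        (N : ℝ) / (4 * (m + 1)) *
          ((if G'.Adj i j then (1 : ℝ) else 0) -
            ((G'.neighborSet i).ncard : ℝ) * ((G'.neighborSet j).ncard : ℝ) /
              (2 * (m + 1)))| ≤ 11 * N / (8 * m) := by
  obtain rfl := G.eq_sup_edge_of_adj_iff hG'
  have hdeg_le (v : Fin N) : ((G.neighborSet v).ncard : ℝ) ≤ m := by
    exact_mod_cast hm ▸ G.ncard_neighborSet_le_ncard_edgeSet v
  have hdeg_mono (v : Fin N) :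
      ((G.neighborSet v).ncard : ℝ) ≤ ((G ⊔ SimpleGraph.edge i₀ j₀).neighborSet v).ncard := by
    exact_mod_cast G.ncard_neighborSet_le_sup_edge i₀ j₀ v
  have hdeg_succ (v : Fin N) :
      (((G ⊔ SimpleGraph.edge i₀ j₀).neighborSet v).ncard : ℝ) ≤ (G.neighborSet v).ncard + 1 := by
    exact_mod_cast G.ncard_neighborSet_sup_edge_le i₀ j₀ v
  have hind (p : Prop) {_ : Decidable p} : (if p then (1 : ℝ) else 0) ∈ Icc (0 : ℝ) 1 := by
    split_ifs <;> norm_num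
  intro i j
  refine (abs_modularity_sub_modularity_succ_le N.cast_nonneg (by exact_mod_cast hm1)
    (hind _) (hind _) (by positivity) (hdeg_le i) (by positivity) (hdeg_le j)
    (hdeg_mono i) (hdeg_succ i) (hdeg_mono j) (hdeg_succ j)).trans ?_
  gcongr
  norm_num

/-- Modularity one-edge estimate: for the modularity function
`F_{ij}(G) = (N/(4m))(A_{ij} - dᵢdⱼ/(2m))`, if `G'` is obtained from `G` (with `m ≥ 1`
edges) by adding the edge `{i₀, j₀}`, then `|F_{ij}(G) - F_{ij}(G')| ≤ 11N/(8m)`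
for all pairs `(i,j)`. -/
theorem modularity_one_edge_estimate {N : ℕ} (G G' : SimpleGraph (Fin N))
    (i₀ j₀ : Fin N) (hne : i₀ ≠ j₀) (hnadj : ¬G.Adj i₀ j₀)
    (hG' : ∀ i j, G'.Adj i j ↔ G.Adj i j ∨ (i = i₀ ∧ j = j₀) ∨ (i = j₀ ∧ j = i₀))
    (m : ℕ) (hm : m = G.edgeSet.ncard) (hm1 : 1 ≤ m) :
    ∀ i j : Fin N,
      |(N : ℝ) / (4 * m) *
          ((if G.Adj i j then (1 : ℝ) else 0) -
            ((G.neighborSet i).ncard : ℝ) * ((G.neighborSet j).ncard : ℝ) / (2 * m)) -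
        (N : ℝ) / (4 * (m + 1)) *
          ((if G'.Adj i j then (1 : ℝ) else 0) -
            ((G'.neighborSet i).ncard : ℝ) * ((G'.neighborSet j).ncard : ℝ) /
              (2 * (m + 1)))| ≤ 11 * N / (8 * m) :=
  modularity_one_edge_estimate_general G G' i₀ j₀ hG' m hm hm1
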